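/- arXiv:1811.00630 — 3 statements merged into one kernel-verified Lean document; each statement's English description precedes it below -/
import Mathlib

section
/- Let ξ ∈ K[G] be nonzero, let β ∈ L ⊗_K L satisfy φ(β) = ξ, and let a, b ∈ ℤ. Then the following are equivalent: (a) [a,b] ∈ D(β); (b) f_ξ(−b−i_0) ≤ a. -/
open scoped TensorProduct

noncomputable section

/-- The natural action of the group algebra `K[G]`, `G = Gal(L/K)`, on `L`. -/
def actK (K L : Type) [Field K] [Field L] [Algebra K L]
    (ξ : MonoidAlgebra K (L ≃ₐ[K] L)) (y : L) : L :=
  ξ.coeff.sum fun σ c => algebraMap K L c * σ y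

/-- `vL` is a normalized (additive, surjective onto `ℤ`) valuation on the field `L`. -/
def IsNormValuation {L : Type} [Field L] (vL : L → WithTop ℤ) : Prop :=
  vL 0 = ⊤ ∧ (∀ x : L, x ≠ 0 → vL x ≠ ⊤) ∧
    (∀ x y : L, vL (x * y) = vL x + vL y) ∧
    (∀ x y : L, min (vL x) (vL y) ≤ vL (x + y)) ∧
    (∀ m : ℤ, ∃ x : L, vL x = (m : WithTop ℤ))

/-- Bundled context: `vL` is the normalized valuation of `L`, Galois-invariant;
`K` embeds with value group `p^n ℤ` (so `L/K` is totally ramified of degree `p^n`);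
`L` is complete; and the residue field (of `K`, hence of `L`) is perfect of
characteristic `p`. -/
def LocalCtx (p n : ℕ) (K L : Type) [Field K] [Field L] [Algebra K L]
    (vL : L → WithTop ℤ) : Prop :=
  IsNormValuation vL ∧
  (∀ (σ : L ≃ₐ[K] L) (x : L), vL (σ x) = vL x) ∧
  (∀ k : K, k ≠ 0 → ∃ m : ℤ, vL (algebraMap K L k) = ((p ^ n * m : ℤ) : WithTop ℤ)) ∧
  (∀ f : ℕ → L,
    (∀ m : ℤ, ∃ N : ℕ, ∀ j k : ℕ, N ≤ j → N ≤ k → (m : WithTop ℤ) < vL (f j - f k)) →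
    ∃ x : L, ∀ m : ℤ, ∃ N : ℕ, ∀ k : ℕ, N ≤ k → (m : WithTop ℤ) < vL (f k - x)) ∧
  (∀ x : K, (0 : WithTop ℤ) ≤ vL (algebraMap K L x) →
    ∃ y : K, (0 : WithTop ℤ) < vL (algebraMap K L (x - y ^ p)))

/-- The `i`-th digit of `s` in base `p`. -/
def digit (p s i : ℕ) : ℕ := s / p ^ i % p

/-- `r : ℤ → S_{p^n}`, the least nonnegative residue modulo `p^n`. -/
def rres (p n : ℕ) (t : ℤ) : ℕ := (t % ((p : ℤ) ^ n)).toNat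

/-- `𝔟(s) = s_(0) p^0 b_n + s_(1) p^1 b_{n-1} + ⋯ + s_(n-1) p^{n-1} b_1`. -/
def bfrak (p n : ℕ) (b : ℕ → ℤ) (s : ℕ) : ℤ :=
  ∑ i ∈ Finset.range n, (digit p s i : ℤ) * (p : ℤ) ^ i * b (n - i)

/-- `𝔞 : S_{p^n} → S_{p^n}` is the inverse of the bijection `r ∘ (-𝔟)`. -/
def IsAfrak (p n : ℕ) (b : ℕ → ℤ) (afrak : ℕ → ℕ) : Prop :=
  ∀ s : ℕ, s < p ^ n → afrak s < p ^ n ∧ rres p n (-(bfrak p n b (afrak s))) = s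

/-- `b 1 ≤ ⋯ ≤ b n` are the lower ramification breaks of `L/K`, counted with
multiplicity: for every `m`, the lower ramification group `G_m` has order
`p ^ #{i ∈ [1,n] : b i ≥ m}`. -/
def IsRamBreaks (p n : ℕ) (K L : Type) [Field K] [Field L] [Algebra K L]
    (vL : L → WithTop ℤ) (b : ℕ → ℤ) : Prop :=
  (∀ i j : ℕ, 1 ≤ i → i ≤ j → j ≤ n → b i ≤ b j) ∧
  ∀ m : ℤ, Nat.card {σ : L ≃ₐ[K] L // ∀ x : L, (0 : WithTop ℤ) ≤ vL x →
      ((m + 1 : ℤ) : WithTop ℤ) ≤ vL (σ x - x)} =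
    p ^ ((Finset.Icc 1 n).filter fun i => m ≤ b i).card

/-- `({Ψ_i}, {λ_t})` is a Galois scaffold for `L/K` with precision `c`. -/
def IsGaloisScaffold (p n : ℕ) (K L : Type) [Field K] [Field L] [Algebra K L]
    (vL : L → WithTop ℤ) (b : ℕ → ℤ) (afrak : ℕ → ℕ)
    (Ψ : ℕ → MonoidAlgebra K (L ≃ₐ[K] L)) (lam : ℤ → L) (c : ℕ) : Prop :=
  (∀ t : ℤ, vL (lam t) = (t : WithTop ℤ)) ∧
  (∀ t₁ t₂ : ℤ, ((p : ℤ) ^ n) ∣ (t₁ - t₂) → ∃ k : K, lam t₁ = algebraMap K L k * lam t₂) ∧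
  (∀ i : ℕ, 1 ≤ i → i ≤ n → actK K L (Ψ i) 1 = 0) ∧
  (∀ i : ℕ, 1 ≤ i → i ≤ n → ∀ t : ℤ,
    (1 ≤ digit p (afrak (rres p n t)) (n - i) →
      ∃ u : K, vL (algebraMap K L u) = 0 ∧
        ((t + (p : ℤ) ^ (n - i) * b i + c : ℤ) : WithTop ℤ) ≤
          vL (actK K L (Ψ i) (lam t) -
            algebraMap K L u * lam (t + (p : ℤ) ^ (n - i) * b i))) ∧
    (digit p (afrak (rres p n t)) (n - i) = 0 →
      ((t + (p : ℤ) ^ (n - i) * b i + c : ℤ) : WithTop ℤ) ≤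
        vL (actK K L (Ψ i) (lam t))))

/-- The map `a ⊗ b ↦ a · σ(b)`. -/
def phiAux (K L : Type) [Field K] [Field L] [Algebra K L] (σ : L ≃ₐ[K] L) :
    L ⊗[K] L →ₗ[K] L :=
  TensorProduct.lift ((LinearMap.mul K L).compl₂ σ.toLinearMap)

/-- The map `φ : L ⊗_K L → L[G]`, `φ(a ⊗ b) = Σ_{σ ∈ G} a σ(b) σ`, with `L[G]`
realized as finitely supported functions `G →₀ L`. -/
def phi (K L : Type) [Field K] [Field L] [Algebra K L] [FiniteDimensional K L] :
    L ⊗[K] L →ₗ[K] ((L ≃ₐ[K] L) →₀ L) :=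
  ∑ σ : L ≃ₐ[K] L, (Finsupp.lsingle σ).comp (phiAux K L σ)

/-- `φ(β)` lies in `K[G] ⊆ L[G]`, i.e. all its coefficients are in `K`. -/
def PhiInKG (K L : Type) [Field K] [Field L] [Algebra K L] [FiniteDimensional K L]
    (β : L ⊗[K] L) : Prop :=
  ∀ σ : L ≃ₐ[K] L, ∃ k : K, phi K L β σ = algebraMap K L k

/-- `𝒯` is the set of Teichmüller representatives of `K`: a multiplicatively
closed set of representatives for the residue field. -/
def IsTeichmuller (K L : Type) [Field K] [Field L] [Algebra K L]
    (vL : L → WithTop ℤ) (𝒯 : Set K) : Prop :=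
  (0 : K) ∈ 𝒯 ∧
  (∀ x ∈ 𝒯, x ≠ 0 → vL (algebraMap K L x) = 0) ∧
  (∀ t₁ ∈ 𝒯, ∀ t₂ ∈ 𝒯, t₁ * t₂ ∈ 𝒯) ∧
  (∀ x : K, (0 : WithTop ℤ) ≤ vL (algebraMap K L x) →
    ∃! t : K, t ∈ 𝒯 ∧ (0 : WithTop ℤ) < vL (algebraMap K L (x - t)))

/-- The partial order on `(ℤ × ℤ)/H`, `H = ⟨(p^n, -p^n)⟩`, expressed on
representatives: `[q] ≤ [q']` iff some representative of `[q']` dominates `q`. -/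
def cosetLE (p n : ℕ) (q q' : ℤ × ℤ) : Prop :=
  ∃ k : ℤ, q.1 ≤ q'.1 + k * (p : ℤ) ^ n ∧ q.2 ≤ q'.2 - k * (p : ℤ) ^ n

/-- Equality of cosets modulo `H = ⟨(p^n, -p^n)⟩`. -/
def cosetEq (p n : ℕ) (q q' : ℤ × ℤ) : Prop :=
  ∃ k : ℤ, q'.1 = q.1 + k * (p : ℤ) ^ n ∧ q'.2 = q.2 - k * (p : ℤ) ^ n

/-- `A : ℤ → ℕ → K` records the coefficients of the expansion
`β = Σ_{(i,j) ∈ ℱ} A i j · π_L^i ⊗ π_L^j` with Teichmüller coefficients: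
writing `β = Σ_{0 ≤ j < p^n} c_j ⊗ π_L^j`, each `c_j` is the convergent sum
`Σ_i A i j π_L^i` (partial sums up to `m` approximate `c_j` within `M_L^{m+1}`). -/
def IsExpansion (p n : ℕ) (K L : Type) [Field K] [Field L] [Algebra K L]
    (vL : L → WithTop ℤ) (𝒯 : Set K) (πL : L) (β : L ⊗[K] L) (A : ℤ → ℕ → K) : Prop :=
  (∀ (i : ℤ) (j : ℕ), A i j ∈ 𝒯) ∧
  ∃ N : ℕ → ℤ, ∃ c : ℕ → L,
    (∀ (j : ℕ) (i : ℤ), i < N j → A i j = 0) ∧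
    β = ∑ j ∈ Finset.range (p ^ n), c j ⊗ₜ[K] (πL ^ j) ∧
    (∀ j : ℕ, j < p ^ n → ∀ m : ℤ,
      (m : WithTop ℤ) <
        vL (c j - ∑ i ∈ Finset.Icc (N j) m, algebraMap K L (A i j) * πL ^ (i : ℤ)))

/-- `R(β)`: the classes `[i,j]`, `(i,j) ∈ ℱ`, with `a_{ij} ≠ 0`. -/
def Rset (p n : ℕ) {K : Type} [Field K] (A : ℤ → ℕ → K) : Set (ℤ × ℤ) :=
  {q | ∃ (i : ℤ) (j : ℕ), j < p ^ n ∧ A i j ≠ 0 ∧ q = (i, (j : ℤ))}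

/-- `D(β)`: the diagram of `β` (upward closure of `R(β)`). -/
def Dset (p n : ℕ) {K : Type} [Field K] (A : ℤ → ℕ → K) : Set (ℤ × ℤ) :=
  {q | ∃ r ∈ Rset p n A, cosetLE p n r q}

/-- `G(β)`: the minimal elements of `D(β)`. -/
def Gset (p n : ℕ) {K : Type} [Field K] (A : ℤ → ℕ → K) : Set (ℤ × ℤ) :=
  {q | q ∈ Dset p n A ∧ ∀ q' ∈ Dset p n A, cosetLE p n q' q → cosetLE p n q q'}

/-- `dval = d(β) = min {i + j : [i,j] ∈ D(β)}`. -/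
def IsDval (p n : ℕ) {K : Type} [Field K] (A : ℤ → ℕ → K) (dval : ℤ) : Prop :=
  IsLeast {v : ℤ | ∃ q ∈ Dset p n A, q.1 + q.2 = v} dval

/-- `N(β)`: the diagonal of `β`. -/
def Nset (p n : ℕ) {K : Type} [Field K] (A : ℤ → ℕ → K) (dval : ℤ) : Set (ℤ × ℤ) :=
  {q | q ∈ Dset p n A ∧ q.1 + q.2 = dval}

/-- `|N(β)| = 2` (as a set of cosets mod `H`). -/
def NTwoCosets (p n : ℕ) {K : Type} [Field K] (A : ℤ → ℕ → K) (dval : ℤ) : Prop :=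
  ∃ q₁ ∈ Nset p n A dval, ∃ q₂ ∈ Nset p n A dval, ¬ cosetEq p n q₁ q₂ ∧
    ∀ q ∈ Nset p n A dval, cosetEq p n q q₁ ∨ cosetEq p n q q₂

/-- `L/K` is semistable: there is `β ∈ L ⊗_K L` with `φ(β) ∈ K[G]`,
`p ∤ d(β)` and `|N(β)| = 2`. -/
def Semistable (p n : ℕ) (K L : Type) [Field K] [Field L] [Algebra K L]
    [FiniteDimensional K L] (vL : L → WithTop ℤ) (𝒯 : Set K) (πL : L) : Prop :=
  ∃ (β : L ⊗[K] L) (A : ℤ → ℕ → K) (dval : ℤ),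
    IsExpansion p n K L vL 𝒯 πL β A ∧ PhiInKG K L β ∧
    IsDval p n A dval ∧ ¬ ((p : ℤ) ∣ dval) ∧ NTwoCosets p n A dval

/-- `L/K` is semistable with precision `c`. -/
def SemistableWithPrec (p n : ℕ) (K L : Type) [Field K] [Field L] [Algebra K L]
    [FiniteDimensional K L] (vL : L → WithTop ℤ) (𝒯 : Set K) (πL : L) (c : ℕ) : Prop :=
  ∃ (β : L ⊗[K] L) (A : ℤ → ℕ → K) (dval : ℤ),
    IsExpansion p n K L vL 𝒯 πL β A ∧ PhiInKG K L β ∧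
    IsDval p n A dval ∧ ¬ ((p : ℤ) ∣ dval) ∧ NTwoCosets p n A dval ∧
    ∀ q ∈ Gset p n A, q ∉ Nset p n A dval → dval + c ≤ q.1 + q.2

/-- `L/K` is stable: semistable with `β` chosen so that `G(β) = N(β)`. -/
def Stable (p n : ℕ) (K L : Type) [Field K] [Field L] [Algebra K L]
    [FiniteDimensional K L] (vL : L → WithTop ℤ) (𝒯 : Set K) (πL : L) : Prop :=
  ∃ (β : L ⊗[K] L) (A : ℤ → ℕ → K) (dval : ℤ),
    IsExpansion p n K L vL 𝒯 πL β A ∧ PhiInKG K L β ∧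
    IsDval p n A dval ∧ ¬ ((p : ℤ) ∣ dval) ∧ NTwoCosets p n A dval ∧
    Gset p n A = Nset p n A dval

/-- `d` is the valuation of the different of `L/K`: the largest `d` such that
every `x` with `v_L(x) ≥ -d` has trace in `O_K`. -/
def IsDifferentExp (K L : Type) [Field K] [Field L] [Algebra K L]
    [FiniteDimensional K L] (vL : L → WithTop ℤ) (d : ℤ) : Prop :=
  IsGreatest {m : ℤ | ∀ x : L, ((-m : ℤ) : WithTop ℤ) ≤ vL x →
    (0 : WithTop ℤ) ≤ vL (algebraMap K L (Algebra.trace K L x))} d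

end

/-!
Write `β = ∑_{j < p^n} c_j ⊗ π_L^j`. Then `ξ(y) = ∑_j c_j Tr(π_L^j y)`, and `v_L(c_j)` is the least
`i` with `a_{ij} ≠ 0`, so `[a,b] ∈ D(β)` says that `v_L(c_j) + p^n k ≤ a` for some `j` and some `k`
with `j - b ≤ p^n k`.

Since `v_L(K^×) = p^n ℤ`, the valuations of `c π_L^j` (`c ∈ K^×`, `j < p^n`) are pairwise
distinct, so the powers `π_L^j` form a `K`-basis of `L` adapted to `v_L`. Together with the
characterization of the different by the trace this gives the duality
`v_L(y) ≥ -b - i₀ ↔ ∀ j < p^n, v_L(Tr(π_L^j y)) ≥ j - b`.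
If `[a,b] ∉ D(β)`, every term `c_j Tr(π_L^j y)` of `ξ(y)` then has valuation `> a`. If
`[a,b] ∈ D(β)`, the element `y` with `Tr(π_L^{j'} y) = δ_{j j'} κ^k`, where `v_L(κ) = p^n`, has
`v_L(ξ(y)) = v_L(c_j) + p^n k ≤ a`.
-/

theorem IsLeast.le_iff_exists_le {α : Type*} [Preorder α] {S : Set α} {x : α} (h : IsLeast S x)
    (a : α) : x ≤ a ↔ ∃ s ∈ S, s ≤ a :=
  ⟨fun hx => ⟨x, h.1, hx⟩, fun ⟨_, hs, hsa⟩ => (h.2 hs).trans hsa⟩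

theorem IsNormValuation.exists_addValuation {L : Type} [Field L] {vL : L → WithTop ℤ}
    (hv : IsNormValuation vL) : ∃ v : AddValuation L (WithTop ℤ), ⇑v = vL := by
  have h1 : vL 1 = 0 := by
    obtain ⟨t, ht⟩ := WithTop.ne_top_iff_exists.mp (hv.2.1 1 one_ne_zero)
    have h := hv.2.2.1 1 1
    rw [mul_one, ← ht, ← WithTop.coe_add, WithTop.coe_inj] at h
    rw [← ht, show t = 0 by omega]
    rfl
  exact ⟨AddValuation.of vL hv.1 h1 hv.2.2.2.1 hv.2.2.1, rfl⟩

namespace AddValuation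

theorem map_zpow_of_eq {F : Type*} [Field F] (w : AddValuation F (WithTop ℤ))
    {x : F} {t : ℤ} (hx : w x = t) (k : ℤ) : w (x ^ k) = ((k * t : ℤ) : WithTop ℤ) := by
  rcases Int.eq_nat_or_neg k with ⟨n, rfl | rfl⟩
  · rw [zpow_natCast, w.map_pow, hx]
    norm_cast
  · rw [zpow_neg, zpow_natCast, w.map_inv, w.map_pow, hx]
    norm_cast
    simp

theorem map_sum_le_of_eq_imp_top {R ι : Type*} [Ring R]
    (w : AddValuation R (WithTop ℤ)) {s : Finset ι} {f : ι → R}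
    (hdist : ∀ i ∈ s, ∀ j ∈ s, i ≠ j → w (f i) = w (f j) → w (f i) = ⊤) {i : ι} (hi : i ∈ s) :
    w (∑ j ∈ s, f j) ≤ w (f i) := by
  classical
  obtain ⟨i₀, hi₀, hmin⟩ := s.exists_min_image (fun j => w (f j)) ⟨i, hi⟩
  by_cases htop : w (f i₀) = ⊤
  · exact le_top.trans (htop ▸ hmin i hi)
  calc w (∑ j ∈ s, f j) = w (f i₀) := by
        rw [← Finset.add_sum_erase s f hi₀]
        refine map_add_eq_of_lt_left _ (map_lt_sum _ htop fun j hj => ?_)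
        refine (hmin j (Finset.mem_of_mem_erase hj)).lt_of_ne fun h => htop ?_
        exact hdist i₀ hi₀ j (Finset.mem_of_mem_erase hj) (Finset.ne_of_mem_erase hj).symm h
    _ ≤ w (f i) := hmin i hi

end AddValuation

def BaseValuesDvd (K : Type*) {L : Type*} [Field K] [Field L] [Algebra K L]
    (v : AddValuation L (WithTop ℤ)) (P : ℕ) : Prop :=
  ∀ k : K, k ≠ 0 → ∃ m : ℤ, v (algebraMap K L k) = ((P * m : ℤ) : WithTop ℤ)

section ValuedExtension

variable {K L : Type*} [Field K] [Field L] [Algebra K L] (v : AddValuation L (WithTop ℤ))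
  {P : ℕ} {π : L}

theorem val_algebraMap_nonneg_of_neg_lt (hK : BaseValuesDvd K v P) {k : K}
    (hk : ((-P : ℤ) : WithTop ℤ) < v (algebraMap K L k)) : 0 ≤ v (algebraMap K L k) := by
  rcases eq_or_ne k 0 with rfl | hk0
  · simp
  obtain ⟨m, hm⟩ := hK k hk0
  rw [hm] at hk ⊢
  norm_cast at hk ⊢
  have hP : (0 : ℤ) ≤ P := P.cast_nonneg
  have hm0 : 0 ≤ m := by
    by_contra! hm0
    nlinarith
  positivity

theorem val_monomial_inj (hK : BaseValuesDvd K v P) (hπ : v π = 1) {k₁ k₂ : K}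
    (hk₁ : k₁ ≠ 0) (hk₂ : k₂ ≠ 0) {j₁ j₂ : ℕ} (hj₁ : j₁ < P) (hj₂ : j₂ < P)
    (h : v (algebraMap K L k₁ * π ^ j₁) = v (algebraMap K L k₂ * π ^ j₂)) : j₁ = j₂ := by
  obtain ⟨m₁, hm₁⟩ := hK k₁ hk₁
  obtain ⟨m₂, hm₂⟩ := hK k₂ hk₂
  simp only [AddValuation.map_mul, AddValuation.map_pow, hπ, hm₁, hm₂, nsmul_one] at h
  have h' : (P * m₁ + j₁ : ℤ) % P = (P * m₂ + j₂ : ℤ) % P := by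
    exact_mod_cast congrArg (· % (P : ℤ)) (WithTop.coe_injective h)
  simpa only [Int.mul_add_emod_self_left, Int.emod_eq_of_lt, Nat.cast_nonneg, Nat.cast_lt, hj₁,
    hj₂, Nat.cast_inj] using h'

theorem val_sum_pow_le (hK : BaseValuesDvd K v P) (hπ : v π = 1) (e : Fin P → K) (i : Fin P) :
    v (∑ j, algebraMap K L (e j) * π ^ (j : ℕ)) ≤ v (algebraMap K L (e i) * π ^ (i : ℕ)) := by
  refine v.map_sum_le_of_eq_imp_top (fun j _ j' _ hne h => ?_) (Finset.mem_univ i)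
  rcases eq_or_ne (e j) 0 with hj | hj
  · simp [hj]
  rcases eq_or_ne (e j') 0 with hj' | hj'
  · simpa [hj'] using h
  exact (hne (Fin.ext (val_monomial_inj v hK hπ hj hj' j.2 j'.2 h))).elim

theorem linearIndependent_pow_of_val (hK : BaseValuesDvd K v P) (hπ : v π = 1) :
    LinearIndependent K fun j : Fin P => π ^ (j : ℕ) := by
  rw [Fintype.linearIndependent_iff]
  intro e he i
  have hπ0 : π ≠ 0 := by
    rintro rfl
    simp at hπ
  have h := val_sum_pow_le v hK hπ e i
  simp only [← Algebra.smul_def, he, AddValuation.map_zero, top_le_iff, v.top_iff,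
    smul_eq_zero, pow_ne_zero _ hπ0, or_false] at h
  exact h

theorem val_le_iff_exists_coeff_ne_zero (hπ : v π = 1) {a : ℤ → K}
    (ha : ∀ i, a i ≠ 0 → v (algebraMap K L (a i)) = 0) {N : ℤ} (hN : ∀ i < N, a i = 0) {c : L}
    (hc : ∀ m : ℤ, (m : WithTop ℤ) < v (c - ∑ i ∈ Finset.Icc N m, algebraMap K L (a i) * π ^ i))
    (i : ℤ) : v c ≤ i ↔ ∃ i' ≤ i, a i' ≠ 0 := by
  classical
  constructor
  · intro hci
    by_contra! hzero
    have h := hc i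
    rw [Finset.sum_eq_zero fun i' hi' => by simp [hzero i' (Finset.mem_Icc.mp hi').2],
      sub_zero] at h
    exact (h.trans_le hci).false
  · rintro ⟨i', hi', ha'⟩
    obtain ⟨i₀, hi₀, hmin⟩ := Int.exists_least_of_bdd (P := fun z => a z ≠ 0)
      ⟨N, fun z hz => not_lt.mp fun h => hz (hN z h)⟩ ⟨i', ha'⟩
    have hsum : ∑ i ∈ Finset.Icc N i₀, algebraMap K L (a i) * π ^ i
        = algebraMap K L (a i₀) * π ^ i₀ := by
      refine Finset.sum_eq_single_of_mem _ (Finset.mem_Icc.mpr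
        ⟨not_lt.mp fun h => hi₀ (hN _ h), le_rfl⟩) fun z hz hne => ?_
      have : a z = 0 := by
        by_contra h
        exact hne ((Finset.mem_Icc.mp hz).2.antisymm (hmin z h))
      simp [this]
    have hval : v (algebraMap K L (a i₀) * π ^ i₀) = i₀ := by
      rw [v.map_mul, ha _ hi₀, v.map_zpow_of_eq (by rw [hπ]; rfl), zero_add, mul_one]
    have h := hc i₀
    rw [hsum, ← hval] at h
    rw [v.map_eq_of_lt_sub h, hval]
    exact_mod_cast (hmin i' ha').trans hi'

theorem exists_val_algebraMap_eq_finrank [FiniteDimensional K L] [IsGalois K L]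
    (hgal : ∀ (σ : L ≃ₐ[K] L) (x : L), v (σ x) = v x) (hπ : v π = 1) :
    ∃ κ : K, v (algebraMap K L κ) = (Module.finrank K L : ℤ) := by
  classical
  have hprod : ∀ s : Finset (L ≃ₐ[K] L), v (∏ σ ∈ s, σ π) = (s.card : ℤ) := by
    intro s
    induction s using Finset.induction_on with
    | empty => simp
    | insert σ s hσ ih =>
      rw [Finset.prod_insert hσ, v.map_mul, ih, hgal, hπ, Finset.card_insert_of_notMem hσ]
      norm_cast
      omega
  refine ⟨Algebra.norm K π, ?_⟩
  rw [Algebra.norm_eq_prod_automorphisms, hprod, Finset.card_univ, ← Nat.card_eq_fintype_card,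
    IsGalois.card_aut_eq_finrank]

variable [FiniteDimensional K L]

noncomputable def powBasis (hK : BaseValuesDvd K v P) (hπ : v π = 1)
    (hP : Module.finrank K L = P) : Module.Basis (Fin P) K L :=
  basisOfLinearIndependentOfCardEqFinrank' _ (linearIndependent_pow_of_val v hK hπ) (by simp [hP])

@[simp]
theorem coe_powBasis (hK : BaseValuesDvd K v P) (hπ : v π = 1) (hP : Module.finrank K L = P) :
    ⇑(powBasis v hK hπ hP) = fun j : Fin P => π ^ (j : ℕ) :=
  coe_basisOfLinearIndependentOfCardEqFinrank' ..

theorem sum_powBasis_repr (hK : BaseValuesDvd K v P) (hπ : v π = 1)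
    (hP : Module.finrank K L = P) (z : L) :
    ∑ j, algebraMap K L ((powBasis v hK hπ hP).repr z j) * π ^ (j : ℕ) = z := by
  conv_rhs => rw [← (powBasis v hK hπ hP).sum_repr z]
  simp [Algebra.smul_def]

theorem val_le_val_powBasis_repr_mul (hK : BaseValuesDvd K v P) (hπ : v π = 1)
    (hP : Module.finrank K L = P) (z : L) (j : Fin P) :
    v z ≤ v (algebraMap K L ((powBasis v hK hπ hP).repr z j) * π ^ (j : ℕ)) := by
  conv_lhs => rw [← sum_powBasis_repr v hK hπ hP z]
  exact val_sum_pow_le v hK hπ _ j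

end ValuedExtension

section Trace

variable {K L : Type} [Field K] [Field L] [Algebra K L] [FiniteDimensional K L]
  (v : AddValuation L (WithTop ℤ)) {P : ℕ} {π : L} {d : ℤ}

theorem le_val_trace_of_mul_sub_le_val (hd : IsDifferentExp K L v d) {κ : K}
    (hκ : v (algebraMap K L κ) = (P : ℤ)) (k : ℤ) {x : L}
    (hx : ((P * k - d : ℤ) : WithTop ℤ) ≤ v x) :
    ((P * k : ℤ) : WithTop ℤ) ≤ v (algebraMap K L (Algebra.trace K L x)) := by
  have hscale := v.map_zpow_of_eq (x := algebraMap K L κ) hκ (-k)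
  have h := hd.1 (κ ^ (-k) • x) (by
    rw [Algebra.smul_def, v.map_mul, map_zpow₀, hscale]
    generalize v x = t at hx ⊢
    cases t with
    | top => simp
    | coe t =>
      have : P * k - d ≤ t := by exact_mod_cast hx
      exact_mod_cast (by linarith : -d ≤ -k * P + t))
  rw [LinearMap.map_smul, smul_eq_mul, map_mul, v.map_mul, map_zpow₀, hscale] at h
  generalize v (algebraMap K L (Algebra.trace K L x)) = t at h ⊢
  cases t with
  | top => simp
  | coe t =>
    have : 0 ≤ -k * P + t := by exact_mod_cast h
    exact_mod_cast (by linarith : P * k ≤ t)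

theorem le_val_trace_of_le_val (hP : 0 < P) (hK : BaseValuesDvd K v P)
    (hd : IsDifferentExp K L v d) {κ : K} (hκ : v (algebraMap K L κ) = (P : ℤ)) (s : ℤ)
    {x : L} (hx : ((s - (d - P + 1) : ℤ) : WithTop ℤ) ≤ v x) :
    (s : WithTop ℤ) ≤ v (algebraMap K L (Algebra.trace K L x)) := by
  rcases eq_or_ne (Algebra.trace K L x) 0 with h0 | h0
  · simp [h0]
  obtain ⟨e, he⟩ := hK _ h0
  rw [he]
  by_contra! hlt
  -- `v (Tr x) = P * e < s` is excluded by the bound for `k = e + 1`.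
  have h := le_val_trace_of_mul_sub_le_val v hd hκ (e + 1) (hx.trans' (by
    norm_cast at hlt ⊢
    linarith))
  rw [he] at h
  norm_cast at h hlt
  nlinarith

theorem le_val_of_forall_le_val_trace_mul (hd : IsDifferentExp K L v d) (r : ℤ) {x : L}
    (hx : ∀ z : L, (r : WithTop ℤ) ≤ v z → 0 ≤ v (algebraMap K L (Algebra.trace K L (x * z)))) :
    ((-d - r : ℤ) : WithTop ℤ) ≤ v x := by
  by_contra! hlt
  have hx0 : x ≠ 0 := by
    rintro rfl
    simp at hlt
  obtain ⟨s, hs⟩ := WithTop.ne_top_iff_exists.mp ((v.ne_top_iff).mpr hx0)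
  rw [← hs] at hlt
  norm_cast at hlt
  -- Substituting `z = x⁻¹ * w` shows that `d + 1` would also bound the different.
  suffices d + 1 ≤ d by omega
  refine hd.2 fun w hw => ?_
  have h := hx (x⁻¹ * w) (by
    rw [v.map_mul, v.map_inv, ← hs]
    generalize v w = t at hw ⊢
    cases t with
    | top => simp
    | coe t =>
      have : -(d + 1) ≤ t := by exact_mod_cast hw
      exact_mod_cast (by omega : r ≤ -s + t))
  rwa [mul_inv_cancel_left₀ hx0] at h

theorem le_val_iff_forall_le_val_trace_pow_mul (hK : BaseValuesDvd K v P) (hπ : v π = 1)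
    (hP : Module.finrank K L = P) (hd : IsDifferentExp K L v d) {κ : K}
    (hκ : v (algebraMap K L κ) = (P : ℤ)) (b : ℤ) (y : L) :
    ((-b - (d - P + 1) : ℤ) : WithTop ℤ) ≤ v y ↔ ∀ j : Fin P, (((j : ℤ) - b : ℤ) : WithTop ℤ) ≤
      v (algebraMap K L (Algebra.trace K L (π ^ (j : ℕ) * y))) := by
  constructor
  · intro hy j
    refine le_val_trace_of_le_val v (hP ▸ Module.finrank_pos) hK hd hκ _ ?_
    rw [v.map_mul, v.map_pow, hπ, nsmul_one]
    generalize v y = t at hy ⊢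
    cases t with
    | top => simp
    | coe t =>
      have : -b - (d - P + 1) ≤ t := by exact_mod_cast hy
      exact_mod_cast (by omega : (j : ℤ) - b - (d - P + 1) ≤ j + t)
  · intro htr
    have h := le_val_of_forall_le_val_trace_mul v hd (b - P + 1) (x := y) fun z hz => ?_
    · rwa [show -d - (b - P + 1) = -b - (d - P + 1) by ring] at h
    set e := (powBasis v hK hπ hP).repr z
    rw [← sum_powBasis_repr v hK hπ hP z, Finset.mul_sum, map_sum, map_sum]
    refine v.map_le_sum fun j _ => val_algebraMap_nonneg_of_neg_lt v hK ?_
    have hzj := hz.trans (val_le_val_powBasis_repr_mul v hK hπ hP z j)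
    rw [v.map_mul, v.map_pow, hπ, nsmul_one] at hzj
    rw [mul_left_comm, ← Algebra.smul_def, LinearMap.map_smul, smul_eq_mul, map_mul, v.map_mul,
      mul_comm y]
    have hj := htr j
    generalize v (algebraMap K L (e j)) = s at hzj ⊢
    generalize v (algebraMap K L (Algebra.trace K L (π ^ (j : ℕ) * y))) = t at hj ⊢
    cases s with
    | top => exact top_add t ▸ WithTop.coe_lt_top _
    | coe s =>
      cases t with
      | top => exact add_top (s : WithTop ℤ) ▸ WithTop.coe_lt_top _
      | coe t =>
        have h₁ : b - P + 1 ≤ s + j := by exact_mod_cast hzj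
        have h₂ : (j : ℤ) - b ≤ t := by exact_mod_cast hj
        exact_mod_cast (by omega : -(P : ℤ) < s + t)

theorem lt_val_sum_trace_of_forall (hK : BaseValuesDvd K v P) (hπ : v π = 1)
    (hP : Module.finrank K L = P) (hd : IsDifferentExp K L v d) {κ : K}
    (hκ : v (algebraMap K L κ) = (P : ℤ)) (c : Fin P → L) {a b : ℤ}
    (hc : ∀ (j : Fin P) (k : ℤ), v (c j) ≤ ((a - P * k : ℤ) : WithTop ℤ) → P * k < (j : ℤ) - b)
    {y : L} (hy : ((-b - (d - P + 1) : ℤ) : WithTop ℤ) ≤ v y) :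
    (a : WithTop ℤ) < v (∑ j, c j * algebraMap K L (Algebra.trace K L (π ^ (j : ℕ) * y))) := by
  refine (WithTop.coe_lt_coe.mpr (lt_add_one a)).trans_le (v.map_le_sum fun j _ => ?_)
  rw [v.map_mul]
  rcases eq_or_ne (Algebra.trace K L (π ^ (j : ℕ) * y)) 0 with h0 | h0
  · simp [h0]
  obtain ⟨k, hk⟩ := hK _ h0
  have hjk := (le_val_iff_forall_le_val_trace_pow_mul v hK hπ hP hd hκ b y).1 hy j
  rw [hk] at hjk ⊢
  have hcj : ((a - P * k : ℤ) : WithTop ℤ) < v (c j) :=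
    not_le.mp fun h => (hc j k h).not_ge (by exact_mod_cast hjk)
  generalize v (c j) = t at hcj ⊢
  cases t with
  | top => simp
  | coe t =>
    have : a - P * k < t := by exact_mod_cast hcj
    exact_mod_cast (by omega : a + 1 ≤ t + P * k)

theorem exists_val_sum_trace_le [Algebra.IsSeparable K L] (hK : BaseValuesDvd K v P)
    (hπ : v π = 1) (hP : Module.finrank K L = P) (hd : IsDifferentExp K L v d) {κ : K}
    (hκ : v (algebraMap K L κ) = (P : ℤ)) (c : Fin P → L) {a b : ℤ} {j : Fin P} {k : ℤ}
    (hcj : v (c j) ≤ ((a - P * k : ℤ) : WithTop ℤ)) (hjk : (j : ℤ) - b ≤ P * k) :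
    ∃ y : L, ((-b - (d - P + 1) : ℤ) : WithTop ℤ) ≤ v y ∧
      v (∑ j, c j * algebraMap K L (Algebra.trace K L (π ^ (j : ℕ) * y))) ≤ a := by
  set B := powBasis v hK hπ hP
  have htr (j' : Fin P) : Algebra.trace K L (π ^ (j' : ℕ) * (κ ^ k • B.traceDual j))
      = if j' = j then κ ^ k else 0 := by
    have h := B.trace_mul_traceDual j' j
    simp only [B, coe_powBasis] at h
    rw [mul_smul_comm, LinearMap.map_smul, h, smul_eq_mul, mul_ite, mul_one, mul_zero]
  refine ⟨κ ^ k • B.traceDual j,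
    (le_val_iff_forall_le_val_trace_pow_mul v hK hπ hP hd hκ b _).2 fun j' => ?_, ?_⟩
  · rw [htr]
    split_ifs with h
    · rw [map_zpow₀, v.map_zpow_of_eq hκ, h]
      exact_mod_cast hjk.trans (le_of_eq (mul_comm _ _))
    · simp
  · rw [Finset.sum_eq_single j (fun j' _ hj' => by rw [htr, if_neg hj', map_zero, mul_zero])
      (by simp), htr, if_pos rfl, v.map_mul, map_zpow₀, v.map_zpow_of_eq hκ]
    generalize v (c j) = t at hcj ⊢
    cases t with
    | top => exact (WithTop.not_top_le_coe _ hcj).elim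
    | coe t =>
      have : t ≤ a - P * k := by exact_mod_cast hcj
      exact_mod_cast (by linarith : t + k * P ≤ a)

theorem exists_val_sum_trace_le_iff [Algebra.IsSeparable K L] (hK : BaseValuesDvd K v P)
    (hπ : v π = 1) (hP : Module.finrank K L = P) (hd : IsDifferentExp K L v d) {κ : K}
    (hκ : v (algebraMap K L κ) = (P : ℤ)) (c : Fin P → L) (a b : ℤ) :
    (∃ y : L, ((-b - (d - P + 1) : ℤ) : WithTop ℤ) ≤ v y ∧
      v (∑ j, c j * algebraMap K L (Algebra.trace K L (π ^ (j : ℕ) * y))) ≤ a) ↔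
    ∃ j : Fin P, ∃ k : ℤ, v (c j) ≤ ((a - P * k : ℤ) : WithTop ℤ) ∧ (j : ℤ) - b ≤ P * k := by
  constructor
  · rintro ⟨y, hy, hya⟩
    by_contra! hc
    exact (hya.trans_lt (lt_val_sum_trace_of_forall v hK hπ hP hd hκ c hc hy)).false
  · rintro ⟨j, k, hcj, hjk⟩
    exact exists_val_sum_trace_le v hK hπ hP hd hκ c hcj hjk

theorem phi_apply (β : L ⊗[K] L) (σ : L ≃ₐ[K] L) : phi K L β σ = phiAux K L σ β := by
  classical
  simp [phi, Finsupp.single_apply]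

theorem actK_eq_sum_trace [IsGalois K L] {ι : Type*} (s : Finset ι) (c e : ι → L)
    (ξ : MonoidAlgebra K (L ≃ₐ[K] L))
    (hξ : ∀ σ, phi K L (∑ j ∈ s, c j ⊗ₜ[K] e j) σ = algebraMap K L (ξ.coeff σ)) (y : L) :
    actK K L ξ y = ∑ j ∈ s, c j * algebraMap K L (Algebra.trace K L (e j * y)) := by
  have hcoeff (σ : L ≃ₐ[K] L) : algebraMap K L (ξ.coeff σ) = ∑ j ∈ s, c j * σ (e j) := by
    simp [← hξ, phi_apply, phiAux]
  simp only [actK, trace_eq_sum_automorphisms, Finset.mul_sum, map_mul]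
  rw [Finsupp.sum_fintype _ _ (by simp), Finset.sum_comm]
  simp only [hcoeff, Finset.sum_mul, mul_assoc]

end Trace

theorem mem_Dset_iff {p n : ℕ} {K : Type} [Field K] {A : ℤ → ℕ → K} {a b : ℤ} :
    (a, b) ∈ Dset p n A ↔ ∃ j : Fin (p ^ n), ∃ k : ℤ,
      (∃ i ≤ a - (p ^ n : ℕ) * k, A i j ≠ 0) ∧ (j : ℤ) - b ≤ (p ^ n : ℕ) * k := by
  push_cast
  constructor
  · rintro ⟨_, ⟨i, j, hj, hA, rfl⟩, k, hi, hj'⟩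
    exact ⟨⟨j, hj⟩, -k, ⟨i, by linarith, hA⟩, by linarith⟩
  · rintro ⟨j, k, ⟨i, hi, hA⟩, hj⟩
    exact ⟨_, ⟨i, j, j.2, hA, rfl⟩, -k, by simp only; linarith, by simp only; linarith⟩

theorem stmt_5_general (p n : ℕ)
    (K L : Type) [Field K] [Field L] [Algebra K L] [IsGalois K L] [FiniteDimensional K L]
    (hdeg : Nat.card (L ≃ₐ[K] L) = p ^ n)
    (vL : L → WithTop ℤ) (hctx : LocalCtx p n K L vL)
    (πL : L) (hπ : vL πL = 1) (𝒯 : Set K) (h𝒯 : IsTeichmuller K L vL 𝒯)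
    (d : ℤ) (hd : IsDifferentExp K L vL d)
    (ξ : MonoidAlgebra K (L ≃ₐ[K] L))
    (β : L ⊗[K] L) (A : ℤ → ℕ → K) (hA : IsExpansion p n K L vL 𝒯 πL β A)
    (hphiβ : ∀ σ : L ≃ₐ[K] L, phi K L β σ = algebraMap K L (ξ.coeff σ))
    (fξ : ℤ → ℤ)
    (hf : ∀ m : ℤ, IsLeast
      {v : WithTop ℤ | ∃ y : L, (m : WithTop ℤ) ≤ vL y ∧ vL (actK K L ξ y) = v}
      ((fξ m : ℤ) : WithTop ℤ))
    (a b : ℤ) :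
    (a, b) ∈ Dset p n A ↔ fξ (-b - (d - (p : ℤ) ^ n + 1)) ≤ a := by
  obtain ⟨hv, hgal, hK, -, -⟩ := hctx
  obtain ⟨v, rfl⟩ := hv.exists_addValuation
  obtain ⟨hT, N, c, hN, rfl, hc⟩ := hA
  have hP : Module.finrank K L = p ^ n := by rw [← IsGalois.card_aut_eq_finrank, hdeg]
  replace hK : BaseValuesDvd K v (p ^ n) := fun k hk => by exact_mod_cast hK k hk
  obtain ⟨κ, hκ⟩ := exists_val_algebraMap_eq_finrank v hgal hπ
  rw [hP] at hκ
  have hcol (j : Fin (p ^ n)) (i : ℤ) : v (c j) ≤ i ↔ ∃ i' ≤ i, A i' j ≠ 0 :=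
    val_le_iff_exists_coeff_ne_zero v hπ (fun i => h𝒯.2.1 _ (hT i j)) (hN j) (hc j j.2) i
  have hact (y : L) : actK K L ξ y =
      ∑ j : Fin (p ^ n), c j * algebraMap K L (Algebra.trace K L (πL ^ (j : ℕ) * y)) := by
    rw [actK_eq_sum_trace _ _ _ ξ hphiβ, Finset.sum_range]
  have hshift : -b - (d - (p : ℤ) ^ n + 1) = -b - (d - (p ^ n : ℕ) + 1) := by push_cast; rfl
  rw [hshift, ← WithTop.coe_le_coe, (hf _).le_iff_exists_le]
  simp only [Set.mem_ofPred_eq, exists_exists_and_eq_and, hact,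
    exists_val_sum_trace_le_iff v hK hπ hP hd hκ, mem_Dset_iff, hcol]

/-- Corollary 3.6 (shiftineq). -/
theorem stmt_5 (p n : ℕ) (hp : p.Prime) (hn : 1 ≤ n)
    (K L : Type) [Field K] [Field L] [Algebra K L] [IsGalois K L] [FiniteDimensional K L]
    (hdeg : Nat.card (L ≃ₐ[K] L) = p ^ n)
    (vL : L → WithTop ℤ) (hctx : LocalCtx p n K L vL)
    (πL : L) (hπ : vL πL = 1) (𝒯 : Set K) (h𝒯 : IsTeichmuller K L vL 𝒯)
    (d : ℤ) (hd : IsDifferentExp K L vL d)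
    (ξ : MonoidAlgebra K (L ≃ₐ[K] L)) (hξ : ξ ≠ 0)
    (β : L ⊗[K] L) (A : ℤ → ℕ → K) (hA : IsExpansion p n K L vL 𝒯 πL β A)
    (hphiβ : ∀ σ : L ≃ₐ[K] L, phi K L β σ = algebraMap K L (ξ.coeff σ))
    (fξ : ℤ → ℤ)
    (hf : ∀ m : ℤ, IsLeast
      {v : WithTop ℤ | ∃ y : L, (m : WithTop ℤ) ≤ vL y ∧ vL (actK K L ξ y) = v}
      ((fξ m : ℤ) : WithTop ℤ))
    (a b : ℤ) :
    (a, b) ∈ Dset p n A ↔ fξ (-b - (d - (p : ℤ) ^ n + 1)) ≤ a :=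
  stmt_5_general p n K L hdeg vL hctx πL hπ 𝒯 h𝒯 d hd ξ β A hA hphiβ fξ hf a b
end

section
/- Suppose ({Ψ_i},{λ_t}) is a Galois scaffold for L/K with precision c ≥ 1. For s ∈ S_{p^n} set Ψ^{(s)} = Ψ_n^{s_(0)}·Ψ_{n−1}^{s_(1)}·⋯·Ψ_2^{s_(n−2)}·Ψ_1^{s_(n−1)} ∈ K[G], and for s, t ∈ S_{p^n} write s ⪯ t if s_(i) ≤ t_(i) for all 0 ≤ i ≤ n−1. Then for every s ∈ S_{p^n} and every t ∈ ℤ there exists U_{st} ∈ O_K^× such that Ψ^{(s)}(λ_t) ≡ U_{st}·λ_{t+𝔟(s)} (mod λ_{t+𝔟(s)}·M_L^c) if s ⪯ 𝔞(r(t)), and Ψ^{(s)}(λ_t) ≡ 0 (mod λ_{t+𝔟(s)}·M_L^c) if s ⋠ 𝔞(r(t)). -/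
/-! Induct on `s`, peeling off its highest nonzero digit `j`: `Ψ^{(s)} = Ψ^{(s - p^j)} Ψ_{n-j}`.
The scaffold congruence for `Ψ_{n-j}(λ_t)` moves `t` to `t + p^j b_{n-j}` and `𝔞(r(t))` to
`𝔞(r(t)) - p^j`, which are exactly the changes of `𝔟(s)` and of the condition `s ⪯ 𝔞(r(t))` when
`s` becomes `s - p^j`. The error term stays small because every `Ψ^{(s')}` raises all valuations by
at least `𝔟(s')`: by induction it does so on the `λ_t`, and the `λ_u`, `0 ≤ u < p^n`, having
valuations distinct mod `p^n`, form a valuation-orthogonal `K`-basis of `L`. -/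

open scoped TensorProduct

/-- The paper's `s ⪯ a`. -/
def DigitLE (p n s a : ℕ) : Prop := ∀ i : ℕ, i < n → digit p s i ≤ digit p a i

section Digits

variable {p n : ℕ}

lemma digit_eq_zero_of_lt {s i : ℕ} (h : s < p ^ i) : digit p s i = 0 := by
  rw [digit, Nat.div_eq_of_lt h, Nat.zero_mod]

lemma digit_log_pos (hp : 1 < p) {s : ℕ} (hs : s ≠ 0) : 1 ≤ digit p s (Nat.log p s) := by
  have hlt : s / p ^ Nat.log p s < p := Nat.div_lt_of_lt_mul (by
    simpa [pow_succ] using Nat.lt_pow_succ_log_self hp s)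
  rw [digit, Nat.mod_eq_of_lt hlt]
  exact (Nat.one_le_div_iff (by positivity)).mpr (Nat.pow_log_le_self p hs)

lemma digit_mul_pow_add (hp : 0 < p) (X : ℕ) {r j : ℕ} (hr : r < p ^ j) (i : ℕ) :
    digit p (X * p ^ j + r) i = if i < j then digit p r i else digit p X (i - j) := by
  unfold digit
  split_ifs with hij
  · obtain ⟨k, rfl⟩ := Nat.exists_eq_add_of_lt hij
    rw [show X * p ^ (i + k + 1) + r = r + p ^ i * (p * (X * p ^ k)) by ring,
      Nat.add_mul_div_left _ _ (by positivity), Nat.add_mul_mod_self_left]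
  · obtain ⟨k, rfl⟩ := Nat.exists_eq_add_of_le (not_lt.mp hij)
    rw [Nat.add_sub_cancel_left, pow_add, ← Nat.div_div_eq_div_mul,
      Nat.add_comm, Nat.add_mul_div_right _ _ (by positivity), Nat.div_eq_of_lt hr, zero_add]

lemma sub_one_div_mod_of_mod_pos {a : ℕ} (h : 0 < a % p) :
    (a - 1) / p = a / p ∧ (a - 1) % p = a % p - 1 := by
  rcases Nat.eq_zero_or_pos p with rfl | hp
  · simp
  have := Nat.div_add_mod a p
  have := Nat.mod_lt a hp
  exact (Nat.div_mod_unique hp).2 ⟨by omega, by omega⟩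

lemma digit_eq_digit_sub_pow_add (hp : 0 < p) {m j : ℕ} (hd : 1 ≤ digit p m j) (i : ℕ) :
    digit p m i = digit p (m - p ^ j) i + if i = j then 1 else 0 := by
  have hA : 0 < m / p ^ j % p := hd
  have hr : m % p ^ j < p ^ j := Nat.mod_lt _ (by positivity)
  have hm : m / p ^ j * p ^ j + m % p ^ j = m := Nat.div_add_mod' m _
  generalize m / p ^ j = A at hA hm
  generalize m % p ^ j = r at hr hm
  subst hm
  have hA1 : p ^ j ≤ A * p ^ j :=
    Nat.le_mul_of_pos_left _ (Nat.pos_of_ne_zero fun h => by simp [h] at hA)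
  have hsub : A * p ^ j + r - p ^ j = (A - 1) * p ^ j + r := by rw [Nat.sub_one_mul]; omega
  rw [hsub, digit_mul_pow_add hp _ hr, digit_mul_pow_add hp _ hr]
  obtain ⟨hdiv, hmod⟩ := sub_one_div_mod_of_mod_pos hA
  split_ifs with hlt heq heq
  · omega
  · rfl
  · subst heq; simp only [digit, Nat.sub_self, pow_zero, Nat.div_one]; omega
  · obtain ⟨k, hk⟩ := Nat.exists_eq_add_of_lt (show 0 < i - j by omega)
    simp only [digit, hk, zero_add, pow_succ', ← Nat.div_div_eq_div_mul, hdiv, add_zero]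

lemma digitLE_iff_of_digit_pos (hp : 0 < p) {s a j : ℕ} (hj : j < n) (hs : 1 ≤ digit p s j) :
    DigitLE p n s a ↔ 1 ≤ digit p a j ∧ DigitLE p n (s - p ^ j) (a - p ^ j) := by
  refine ⟨fun h => ⟨hs.trans (h j hj), fun i hi => ?_⟩, fun ⟨ha, h⟩ i hi => ?_⟩
  · have := h i hi
    rw [digit_eq_digit_sub_pow_add hp hs, digit_eq_digit_sub_pow_add hp (hs.trans (h j hj))] at this
    omega
  · rw [digit_eq_digit_sub_pow_add hp hs, digit_eq_digit_sub_pow_add hp ha]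
    exact Nat.add_le_add_right (h i hi) _

end Digits

section Frak

variable {p n : ℕ}

lemma bfrak_eq_bfrak_sub_pow_add (hp : 0 < p) (b : ℕ → ℤ) {m j : ℕ} (hj : j < n)
    (hd : 1 ≤ digit p m j) :
    bfrak p n b m = bfrak p n b (m - p ^ j) + (p : ℤ) ^ j * b (n - j) := by
  simp only [bfrak, digit_eq_digit_sub_pow_add hp hd _ (p := p) (m := m)]
  simp [add_mul, Finset.sum_add_distrib, hj]

lemma bfrak_zero (b : ℕ → ℤ) : bfrak p n b 0 = 0 := by
  simp [bfrak, digit]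

lemma cast_rres (hp : 0 < p) (t : ℤ) : (rres p n t : ℤ) = t % (p : ℤ) ^ n :=
  Int.toNat_of_nonneg (Int.emod_nonneg t (by positivity))

lemma rres_lt (hp : 0 < p) (t : ℤ) : rres p n t < p ^ n := by
  rw [← Nat.cast_lt (α := ℤ), cast_rres hp]
  push_cast
  exact Int.emod_lt_of_pos t (by positivity)

lemma rres_eq_rres_iff (hp : 0 < p) {x y : ℤ} :
    rres p n x = rres p n y ↔ x ≡ y [ZMOD (p : ℤ) ^ n] := by
  rw [← Nat.cast_inj (R := ℤ), cast_rres hp, cast_rres hp]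
  rfl

variable {b : ℕ → ℤ} {afrak : ℕ → ℕ}

/-- `𝔞` is a right inverse of `r ∘ (-𝔟)` on the finite set `S_{p^n}`, hence also a left inverse. -/
lemma IsAfrak.afrak_rres_neg_bfrak (h : IsAfrak p n b afrak) {m : ℕ}
    (hm : m < p ^ n) : afrak (rres p n (-bfrak p n b m)) = m := by
  have hinj : Set.InjOn afrak (Finset.range (p ^ n)) := fun s hs s' hs' hss' => by
    rw [← (h s (by simpa using hs)).2, ← (h s' (by simpa using hs')).2, hss']
  obtain ⟨s, hs, rfl⟩ := Finset.surjOn_of_injOn_of_card_le afrak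
    (fun s hs => by simpa using (h s (by simpa using hs)).1) hinj le_rfl (by simpa using hm)
  rw [(h s (by simpa using hs)).2]

lemma IsAfrak.afrak_rres_add (h : IsAfrak p n b afrak) (hp : 0 < p) {t : ℤ} {j : ℕ}
    (hj : j < n) (hd : 1 ≤ digit p (afrak (rres p n t)) j) :
    afrak (rres p n (t + (p : ℤ) ^ j * b (n - j))) = afrak (rres p n t) - p ^ j := by
  set a := afrak (rres p n t)
  obtain ⟨ha, hra⟩ := h _ (rres_lt hp t)
  rw [← h.afrak_rres_neg_bfrak (m := a - p ^ j) (by omega)]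
  congr 1
  rw [rres_eq_rres_iff hp] at hra ⊢
  rw [bfrak_eq_bfrak_sub_pow_add hp b hj hd] at hra
  simpa using (hra.symm.add_right ((p : ℤ) ^ j * b (n - j)))

end Frak

/-- The paper's `Ψ^{(s)}`; its rightmost factor `Ψ_1^{s_(n-1)}` acts first. -/
def digitMonomial {M : Type*} [Monoid M] (Ψ : ℕ → M) (p n s : ℕ) : M :=
  ((List.range n).map fun i => Ψ (n - i) ^ digit p s i).prod

section Monomial

variable {M : Type*} [Monoid M] {p n : ℕ}

lemma List.prod_map_range_eq_of_eq_one (f : ℕ → M) {k n : ℕ} (hkn : k ≤ n)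
    (hf : ∀ i, k ≤ i → i < n → f i = 1) :
    ((List.range n).map f).prod = ((List.range k).map f).prod := by
  induction n, hkn using Nat.le_induction with
  | base => rfl
  | succ n hkn ih =>
    rw [List.prod_range_succ, hf n hkn n.lt_succ_self, mul_one,
      ih fun i hki hin => hf i hki (Nat.lt_succ_of_lt hin)]

lemma digitMonomial_zero (Ψ : ℕ → M) : digitMonomial Ψ p n 0 = 1 :=
  List.prod_eq_one fun _ hx => by
    obtain ⟨i, -, rfl⟩ := List.mem_map.mp hx
    simp [digit]

lemma map_digitMonomial {N F : Type*} [Monoid N] [FunLike F M N] [MonoidHomClass F M N] (f : F)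
    (Ψ : ℕ → M) (s : ℕ) :
    f (digitMonomial Ψ p n s) = digitMonomial (f ∘ Ψ) p n s := by
  simp [digitMonomial, map_list_prod, List.map_map, Function.comp_def]

lemma digitMonomial_eq_mul (Ψ : ℕ → M) (hp : 0 < p) {s j : ℕ} (hj : j < n)
    (hs : s < p ^ (j + 1)) (hd : 1 ≤ digit p s j) :
    digitMonomial Ψ p n s = digitMonomial Ψ p n (s - p ^ j) * Ψ (n - j) := by
  have htrunc : ∀ m ≤ s, digitMonomial Ψ p n m =
      ((List.range j).map fun i => Ψ (n - i) ^ digit p m i).prod * Ψ (n - j) ^ digit p m j := by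
    intro m hm
    rw [digitMonomial, List.prod_map_range_eq_of_eq_one _ hj fun i hi _ => by
      rw [digit_eq_zero_of_lt ((hm.trans_lt hs).trans_le (Nat.pow_le_pow_right hp hi)),
        pow_zero], List.prod_range_succ]
  rw [htrunc s le_rfl, htrunc _ (Nat.sub_le _ _), mul_assoc, ← pow_succ,
    digit_eq_digit_sub_pow_add hp hd j, if_pos rfl]
  congr 2
  refine List.map_congr_left fun i hi => ?_
  rw [digit_eq_digit_sub_pow_add hp hd i, if_neg (List.mem_range.mp hi).ne, add_zero]

end Monomial

noncomputable def galoisAction (K L : Type*) [Field K] [Field L] [Algebra K L] :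
    MonoidAlgebra K (L ≃ₐ[K] L) →ₐ[K] Module.End K L :=
  MonoidAlgebra.lift K (Module.End K L) (L ≃ₐ[K] L) (AlgEquiv.toLinearMapHom K L)

lemma actK_eq_galoisAction (K L : Type) [Field K] [Field L] [Algebra K L]
    (ξ : MonoidAlgebra K (L ≃ₐ[K] L)) (y : L) : actK K L ξ y = galoisAction K L ξ y := by
  simp [galoisAction, MonoidAlgebra.lift_apply, actK, Finsupp.sum, Algebra.smul_def]

section Valuation

lemma withTop_int_eq_zero_of_add_self {x : WithTop ℤ} (hx : x ≠ ⊤) (h : x = x + x) : x = 0 := by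
  lift x to ℤ using hx
  norm_cast at h ⊢
  omega

def IsNormValuation.toAddValuation {L : Type} [Field L] {vL : L → WithTop ℤ}
    (h : IsNormValuation vL) : AddValuation L (WithTop ℤ) :=
  AddValuation.of vL h.1
    (withTop_int_eq_zero_of_add_self (h.2.1 1 one_ne_zero) (by rw [← h.2.2.1, one_mul]))
    h.2.2.2.1 h.2.2.1

@[simp]
lemma IsNormValuation.toAddValuation_apply {L : Type} [Field L] {vL : L → WithTop ℤ}
    (h : IsNormValuation vL) (x : L) : h.toAddValuation x = vL x :=
  rfl

variable {K L : Type*} [Field K] [Field L] [Algebra K L] (v : AddValuation L (WithTop ℤ))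

variable (K) in
/-- `ScaffoldCongr K v lam c P y t` says `y ≡ U λ_t (mod λ_t M_L^c)` for a unit `U ∈ O_K^×` if `P`
holds, and `y ≡ 0 (mod λ_t M_L^c)` otherwise. -/
def ScaffoldCongr (lam : ℤ → L) (c : ℕ) (P : Prop) (y : L) (t : ℤ) : Prop :=
  (P → ∃ U : K, v (algebraMap K L U) = 0 ∧
      ((t + c : ℤ) : WithTop ℤ) ≤ v (y - algebraMap K L U * lam t)) ∧
    (¬P → ((t + c : ℤ) : WithTop ℤ) ≤ v y)

variable {v} {lam : ℤ → L} {c : ℕ}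

lemma scaffoldCongr_lam {P : Prop} (hP : P) (t : ℤ) : ScaffoldCongr K v lam c P (lam t) t :=
  ⟨fun _ => ⟨1, by simp⟩, fun h => absurd hP h⟩

lemma ScaffoldCongr.le_valuation {P : Prop} {y : L} {t : ℤ} (hlam : v (lam t) = t)
    (h : ScaffoldCongr K v lam c P y t) : (t : WithTop ℤ) ≤ v y := by
  have htc : (t : WithTop ℤ) ≤ ((t + c : ℤ) : WithTop ℤ) := by norm_cast; omega
  by_cases hP : P
  · obtain ⟨U, hU, hy⟩ := h.1 hP
    rw [← sub_add_cancel y (algebraMap K L U * lam t)]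
    exact v.map_le_add (htc.trans hy) (by rw [v.map_mul, hU, hlam, zero_add])
  · exact htc.trans (h.2 hP)

lemma ScaffoldCongr.map {P Q : Prop} {y : L} {t γ : ℤ} {f : L →ₗ[K] L}
    (hfv : ∀ x, v x + γ ≤ v (f x)) (hy : ScaffoldCongr K v lam c P y t)
    (hf : P → ScaffoldCongr K v lam c Q (f (lam t)) (t + γ)) :
    ScaffoldCongr K v lam c (P ∧ Q) (f y) (t + γ) := by
  have hshift : ∀ x, ((t + c : ℤ) : WithTop ℤ) ≤ v x → ((t + γ + c : ℤ) : WithTop ℤ) ≤ v (f x) :=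
    fun x hx => le_of_eq_of_le (by rw [← WithTop.coe_add, add_right_comm])
      ((add_le_add_left hx _).trans (hfv x))
  by_cases hP : P
  · obtain ⟨U, hU, hyU⟩ := hy.1 hP
    have hunitf : ∀ z, f (algebraMap K L U * z) = algebraMap K L U * f z := fun z => by
      rw [← Algebra.smul_def, f.map_smul, Algebra.smul_def]
    have hfy : f y = f (y - algebraMap K L U * lam t) + algebraMap K L U * f (lam t) := by
      rw [← hunitf, ← map_add, sub_add_cancel]
    have hunit : ∀ z, v (algebraMap K L U * z) = v z := fun z => by rw [v.map_mul, hU, zero_add]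
    refine ⟨fun ⟨_, hQ⟩ => ?_, fun hPQ => ?_⟩
    · obtain ⟨U', hU', hfU'⟩ := (hf hP).1 hQ
      refine ⟨U * U', by rw [map_mul, v.map_mul, hU, hU', add_zero], ?_⟩
      have hsplit : f y - algebraMap K L (U * U') * lam (t + γ) = f (y - algebraMap K L U * lam t)
          + algebraMap K L U * (f (lam t) - algebraMap K L U' * lam (t + γ)) := by
        rw [hfy, map_mul]; ring
      rw [hsplit]
      exact v.map_le_add (hshift _ hyU) (by rw [hunit]; exact hfU')
    · rw [hfy]
      exact v.map_le_add (hshift _ hyU) (by rw [hunit]; exact (hf hP).2 fun hQ => hPQ ⟨hP, hQ⟩)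
  · exact ⟨fun hPQ => absurd hPQ.1 hP, fun _ => hshift y (hy.2 hP)⟩

variable {N : ℕ}
  (hvK : ∀ k : K, k ≠ 0 → ∃ m : ℤ, v (algebraMap K L k) = ((N * m : ℤ) : WithTop ℤ))
  (hlam : ∀ t : ℤ, v (lam t) = t)
include hvK hlam

/-- The terms have valuations in distinct classes mod `N`, so the valuation of the sum is the least
of theirs. -/
lemma valuation_sum_le_term (g : Fin N → K) (u : Fin N) :
    v (∑ w, g w • lam w) ≤ v (g u • lam u) := by
  classical
  have hval : ∀ w, g w ≠ 0 → ∃ m : ℤ, v (g w • lam w) = ((N * m + w : ℤ) : WithTop ℤ) := by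
    intro w hw
    obtain ⟨m, hm⟩ := hvK _ hw
    exact ⟨m, by rw [Algebra.smul_def, v.map_mul, hm, hlam]; rfl⟩
  have hinj : ∀ w w', v (g w • lam w) ≠ ⊤ → v (g w • lam w) = v (g w' • lam w') → w = w' := by
    intro w w' hw hww'
    have hgw : g w ≠ 0 := fun h => hw (by simp [h])
    have hgw' : g w' ≠ 0 := fun h => hw (by simp [hww', h])
    obtain ⟨m, hm⟩ := hval w hgw
    obtain ⟨m', hm'⟩ := hval w' hgw'
    rw [hm, hm', WithTop.coe_eq_coe] at hww'
    have hres : ∀ (m : ℤ) (w : Fin N), (N * m + w : ℤ) % N = w := fun m w => by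
      rw [add_comm, Int.add_mul_emod_self_left,
        Int.emod_eq_of_lt (by positivity) (by exact_mod_cast w.2)]
    have h := hres m w
    rw [hww', hres] at h
    exact Fin.ext (by exact_mod_cast h.symm)
  obtain ⟨w₀, -, hmin⟩ := Finset.exists_min_image Finset.univ (fun w => v (g w • lam w))
    ⟨u, Finset.mem_univ u⟩
  by_cases htop : v (g w₀ • lam w₀) = ⊤
  · exact le_top.trans (htop.symm.trans_le (hmin u (Finset.mem_univ u)))
  rw [← Finset.add_sum_erase _ _ (Finset.mem_univ w₀), v.map_add_eq_of_lt_left]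
  · exact hmin u (Finset.mem_univ u)
  · refine v.map_lt_sum htop fun w hw => (hmin w (Finset.mem_univ w)).lt_of_ne fun h => ?_
    exact Finset.ne_of_mem_erase hw (hinj _ _ htop h).symm

lemma linearIndependent_lam : LinearIndependent K fun u : Fin N => lam u := by
  refine Fintype.linearIndependent_iff.mpr fun g hg u => ?_
  have h := valuation_sum_le_term hvK hlam g u
  rw [hg, v.map_zero, top_le_iff, v.top_iff, smul_eq_zero] at h
  exact h.resolve_right fun h0 => by simpa [h0] using hlam u

/-- For `[L : K] = N` the `λ_u`, `0 ≤ u < N`, form a basis, which is valuation-orthogonal by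
`valuation_sum_le_term`. -/
lemma le_valuation_map_of_forall_lam [FiniteDimensional K L] (hN : Module.finrank K L = N)
    (f : L →ₗ[K] L) {γ : ℤ} (hf : ∀ t : ℤ, ((t + γ : ℤ) : WithTop ℤ) ≤ v (f (lam t)))
    (x : L) : v x + γ ≤ v (f x) := by
  have : Nonempty (Fin N) := ⟨⟨0, hN ▸ Module.finrank_pos⟩⟩
  set B := basisOfLinearIndependentOfCardEqFinrank (linearIndependent_lam hvK hlam)
    (by rw [Fintype.card_fin, hN])
  have hx : x = ∑ u, B.repr x u • lam u := by
    conv_lhs => rw [← B.sum_repr x]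
    simp [B]
  have hfx : f x = ∑ u, B.repr x u • f (lam u) := by
    conv_lhs => rw [hx]
    simp
  rw [hfx]
  refine v.map_le_sum fun u _ => ?_
  calc v x + γ
      ≤ v (B.repr x u • lam u) + γ := by
        gcongr; exact (congrArg v hx).trans_le (valuation_sum_le_term hvK hlam _ u)
    _ = v (algebraMap K L (B.repr x u)) + ((u + γ : ℤ) : WithTop ℤ) := by
      rw [Algebra.smul_def, v.map_mul, hlam, add_assoc]; rfl
    _ ≤ v (B.repr x u • f (lam u)) := by
      rw [Algebra.smul_def, v.map_mul]; gcongr; exact hf u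

end Valuation

theorem scaffoldCongr_digitMonomial {K L : Type*} [Field K] [Field L] [Algebra K L]
    [FiniteDimensional K L] {v : AddValuation L (WithTop ℤ)} {lam : ℤ → L} {c p n : ℕ}
    {b : ℕ → ℤ} {afrak : ℕ → ℕ} {Ψ : ℕ → Module.End K L} (hp : 1 < p)
    (hN : Module.finrank K L = p ^ n)
    (hvK : ∀ k : K, k ≠ 0 → ∃ m : ℤ, v (algebraMap K L k) = (((p ^ n : ℕ) * m : ℤ) : WithTop ℤ))
    (hlam : ∀ t : ℤ, v (lam t) = t) (hafrak : IsAfrak p n b afrak)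
    (hΨ : ∀ i, 1 ≤ i → i ≤ n → ∀ t : ℤ,
      ScaffoldCongr K v lam c (1 ≤ digit p (afrak (rres p n t)) (n - i)) (Ψ i (lam t))
        (t + (p : ℤ) ^ (n - i) * b i)) :
    ∀ s < p ^ n, ∀ t : ℤ, ScaffoldCongr K v lam c (DigitLE p n s (afrak (rres p n t)))
      (digitMonomial Ψ p n s (lam t)) (t + bfrak p n b s) := by
  intro s
  induction s using Nat.strong_induction_on with
  | _ s IH =>
  intro hs t
  rcases eq_or_ne s 0 with rfl | hs0
  · rw [digitMonomial_zero, bfrak_zero, add_zero]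
    exact scaffoldCongr_lam (fun i _ => by simp [digit]) t
  have hp0 : 0 < p := by omega
  set j := Nat.log p s
  have hj : j < n := Nat.log_lt_of_lt_pow hs0 hs
  have hd : 1 ≤ digit p s j := digit_log_pos hp hs0
  have hs' : s - p ^ j < s := Nat.sub_lt (Nat.pos_of_ne_zero hs0) (by positivity)
  set t' := t + (p : ℤ) ^ j * b (n - j)
  have hfirst := hΨ (n - j) (by omega) (by omega) t
  rw [Nat.sub_sub_self hj.le] at hfirst
  have hmap := hfirst.map
    (le_valuation_map_of_forall_lam hvK hlam hN _
      fun t'' => (IH _ hs' (by omega) t'').le_valuation (hlam _))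
    (fun _ => IH _ hs' (by omega) t')
  have hcond : (1 ≤ digit p (afrak (rres p n t)) j ∧
        DigitLE p n (s - p ^ j) (afrak (rres p n t'))) ↔ DigitLE p n s (afrak (rres p n t)) := by
    rw [digitLE_iff_of_digit_pos hp0 hj hd]
    exact and_congr_right fun hda => by rw [hafrak.afrak_rres_add hp0 hj hda]
  rw [digitMonomial_eq_mul Ψ hp0 hj (Nat.lt_pow_succ_log_self hp s) hd, Module.End.mul_apply,
    bfrak_eq_bfrak_sub_pow_add hp0 b hj hd, ← hcond,
    show t + (bfrak p n b (s - p ^ j) + (p : ℤ) ^ j * b (n - j)) = t' + bfrak p n b (s - p ^ j)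
      by ring]
  exact hmap

theorem stmt_16_general (p n : ℕ) (hp : p.Prime)
    (K L : Type) [Field K] [Field L] [Algebra K L] [IsGalois K L] [FiniteDimensional K L]
    (hdeg : Nat.card (L ≃ₐ[K] L) = p ^ n)
    (vL : L → WithTop ℤ) (hctx : LocalCtx p n K L vL)
    (b : ℕ → ℤ)
    (afrak : ℕ → ℕ) (hafrak : IsAfrak p n b afrak)
    (Ψ : ℕ → MonoidAlgebra K (L ≃ₐ[K] L)) (lam : ℤ → L)
    (c : ℕ)
    (hscaf : IsGaloisScaffold p n K L vL b afrak Ψ lam c) :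
    ∀ s : ℕ, s < p ^ n → ∀ t : ℤ,
      ((∀ i : ℕ, i < n → digit p s i ≤ digit p (afrak (rres p n t)) i) →
        ∃ U : K, vL (algebraMap K L U) = 0 ∧
          ((t + bfrak p n b s + c : ℤ) : WithTop ℤ) ≤
            vL (actK K L (((List.range n).map fun i => Ψ (n - i) ^ digit p s i).prod)
                  (lam t) -
                algebraMap K L U * lam (t + bfrak p n b s))) ∧
      ((¬ ∀ i : ℕ, i < n → digit p s i ≤ digit p (afrak (rres p n t)) i) →
        ((t + bfrak p n b s + c : ℤ) : WithTop ℤ) ≤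
          vL (actK K L (((List.range n).map fun i => Ψ (n - i) ^ digit p s i).prod)
                (lam t))) := by
  obtain ⟨hv, -, hvK, -, -⟩ := hctx
  obtain ⟨hlam, -, -, hΨ⟩ := hscaf
  have hN : Module.finrank K L = p ^ n := by rw [← IsGalois.card_aut_eq_finrank, hdeg]
  intro s hs t
  have h := scaffoldCongr_digitMonomial (v := hv.toAddValuation) (c := c)
    (Ψ := galoisAction K L ∘ Ψ) hp.one_lt hN (fun k hk => by simpa using hvK k hk) hlam hafrak (fun i hi hin t => ?_) s hs t
  · rw [← map_digitMonomial, ← actK_eq_galoisAction] at h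
    exact h
  obtain ⟨hpos, hzero⟩ := hΨ i hi hin t
  rw [Function.comp_apply, ← actK_eq_galoisAction]
  exact ⟨hpos, fun hd => hzero (by omega)⟩

/-- Equation (1) of the paper: action of the monomials Ψ^(s) on the λ_t. -/
theorem stmt_16 (p n : ℕ) (hp : p.Prime) (hn : 1 ≤ n)
    (K L : Type) [Field K] [Field L] [Algebra K L] [IsGalois K L] [FiniteDimensional K L]
    (hdeg : Nat.card (L ≃ₐ[K] L) = p ^ n)
    (vL : L → WithTop ℤ) (hctx : LocalCtx p n K L vL)
    (b : ℕ → ℤ) (hb : IsRamBreaks p n K L vL b)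
    (hpb : ∀ i : ℕ, 1 ≤ i → i ≤ n → ¬ ((p : ℤ) ∣ b i))
    (afrak : ℕ → ℕ) (hafrak : IsAfrak p n b afrak)
    (Ψ : ℕ → MonoidAlgebra K (L ≃ₐ[K] L)) (lam : ℤ → L)
    (c : ℕ) (hc1 : 1 ≤ c)
    (hscaf : IsGaloisScaffold p n K L vL b afrak Ψ lam c) :
    ∀ s : ℕ, s < p ^ n → ∀ t : ℤ,
      ((∀ i : ℕ, i < n → digit p s i ≤ digit p (afrak (rres p n t)) i) →
        ∃ U : K, vL (algebraMap K L U) = 0 ∧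
          ((t + bfrak p n b s + c : ℤ) : WithTop ℤ) ≤
            vL (actK K L (((List.range n).map fun i => Ψ (n - i) ^ digit p s i).prod)
                  (lam t) -
                algebraMap K L U * lam (t + bfrak p n b s))) ∧
      ((¬ ∀ i : ℕ, i < n → digit p s i ≤ digit p (afrak (rres p n t)) i) →
        ((t + bfrak p n b s + c : ℤ) : WithTop ℤ) ≤
          vL (actK K L (((List.range n).map fun i => Ψ (n - i) ^ digit p s i).prod)
                (lam t))) :=
  stmt_16_general p n hp K L hdeg vL hctx b afrak hafrak Ψ lam c hscaf
end

section
/- Let ξ ∈ K[G] be nonzero. Then the function f_ξ is well defined (the minimum defining f_ξ(a) exists for every a ∈ ℤ), f_ξ(a+1) ≥ f_ξ(a) for all a ∈ ℤ, and for every a ∈ ℤ there exists z ∈ L with v_L(z) = a and v_L(ξ(z)) = f_ξ(a). -/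
open scoped TensorProduct

/-!
Galois invariance of `v_L` gives a constant `c` with `v_L(ξ y) ≥ c + v_L(y)`, so the values
`v_L(ξ y)`, `y ∈ M_L^m`, are bounded below. They are not all `∞`: by Dedekind's independence of
characters `ξ` acts as a nonzero operator, and multiplying a non-kernel element by a power of
the norm of a uniformizer (an element of `K` of positive valuation) moves it into `M_L^m`.
Given a minimiser `y ∈ M_L^m` and any `x` with `v_L(x) = m`, one of `y`, `x`, `x + y` has
valuation exactly `m` and attains the minimum, by the strict triangle inequality.
-/
namespace IsNormValuation

variable {L : Type} [Field L] {vL : L → WithTop ℤ}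

lemma map_one (h : IsNormValuation vL) : vL 1 = 0 := by
  obtain ⟨-, hne, hmul, -, -⟩ := h
  have hsq := hmul 1 1
  rw [one_mul] at hsq
  lift vL 1 to ℤ using hne 1 one_ne_zero with t
  norm_cast at hsq ⊢
  omega

def toAddValuation_s17 (h : IsNormValuation vL) : AddValuation L (WithTop ℤ) :=
  AddValuation.of vL h.1 h.map_one h.2.2.2.1 h.2.2.1

@[simp]
lemma coe_toAddValuation (h : IsNormValuation vL) : ⇑h.toAddValuation_s17 = vL := rfl

end IsNormValuation

lemma WithTop.exists_isLeast_coe {S : Set (WithTop ℤ)}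
    (hbdd : ∃ b : ℤ, ∀ w ∈ S, (b : WithTop ℤ) ≤ w) (hne : ∃ t : ℤ, (t : WithTop ℤ) ∈ S) :
    ∃ f : ℤ, IsLeast S f := by
  obtain ⟨b, hb⟩ := hbdd
  obtain ⟨f, hfS, hf⟩ := Int.exists_least_of_bdd (P := fun z : ℤ => (z : WithTop ℤ) ∈ S)
    ⟨b, fun z hz => WithTop.coe_le_coe.mp (hb _ hz)⟩ hne
  refine ⟨f, hfS, fun w hw => ?_⟩
  cases w with
  | top => exact le_top
  | coe z => exact WithTop.coe_le_coe.mpr (hf z hw)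

section ActK

variable {K L : Type} [Field K] [Field L] [Algebra K L] (ξ : MonoidAlgebra K (L ≃ₐ[K] L))

lemma actK_add (x y : L) : actK K L ξ (x + y) = actK K L ξ x + actK K L ξ y := by
  simp only [actK, map_add, mul_add, Finsupp.sum_add]

lemma actK_algebraMap_mul (k : K) (y : L) :
    actK K L ξ (algebraMap K L k * y) = algebraMap K L k * actK K L ξ y := by
  simp only [actK, map_mul, AlgEquiv.commutes, Finsupp.mul_sum, mul_left_comm]

lemma actK_zero : actK K L ξ 0 = 0 := by
  simp [actK]

lemma exists_actK_ne_zero (hξ : ξ ≠ 0) : ∃ y, actK K L ξ y ≠ 0 := by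
  by_contra! hzero
  have hind := (linearIndependent_toLinearMap K L L).comp _ AlgEquiv.coe_toAlgHom_injective
  refine hξ (MonoidAlgebra.coeff_eq_zero.mp ?_)
  refine Finsupp.mapRange_injective _ (map_zero _) (FaithfulSMul.algebraMap_injective K L)
    ((linearIndependent_iff.mp hind _ ?_).trans Finsupp.mapRange_zero.symm)
  ext y
  simpa [Finsupp.linearCombination_apply, Finsupp.sum_mapRange_index, Finsupp.sum_apply,
    Algebra.smul_def, actK] using hzero y

end ActK

section Valuation

variable {K L : Type} [Field K] [Field L] [Algebra K L] (v : AddValuation L (WithTop ℤ))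

lemma AddValuation.map_algebraMap_norm [IsGalois K L] [FiniteDimensional K L]
    (hv : ∀ (σ : L ≃ₐ[K] L) x, v (σ x) = v x) (x : L) :
    v (algebraMap K L (Algebra.norm K x)) = Fintype.card (L ≃ₐ[K] L) • v x := by
  classical
  rw [Algebra.norm_eq_prod_automorphisms, ← Finset.card_univ, ← Finset.sum_const]
  induction (Finset.univ : Finset (L ≃ₐ[K] L)) using Finset.induction with
  | empty => simp
  | insert σ s hσ ih => rw [Finset.prod_insert hσ, Finset.sum_insert hσ, v.map_mul, hv, ih]

lemma exists_le_add_valuation_le_valuation_actK (hv : ∀ (σ : L ≃ₐ[K] L) x, v (σ x) = v x)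
    (ξ : MonoidAlgebra K (L ≃ₐ[K] L)) :
    ∃ c : ℤ, ∀ y, (c : WithTop ℤ) + v y ≤ v (actK K L ξ y) := by
  classical
  obtain ⟨c, hc⟩ := (ξ.coeff.support.image fun σ =>
    (v (algebraMap K L (ξ.coeff σ))).untopD 0).bddBelow
  refine ⟨c, fun y => v.map_le_sum fun σ hσ => ?_⟩
  rw [v.map_mul, hv]
  gcongr
  calc (c : WithTop ℤ) ≤ ((v (algebraMap K L (ξ.coeff σ))).untopD 0 : ℤ) :=
        WithTop.coe_le_coe.mpr (hc (Finset.mem_image_of_mem _ hσ))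
    _ ≤ v (algebraMap K L (ξ.coeff σ)) := WithTop.coe_untopD_le _ 0

lemma exists_le_valuation_actK_ne_zero {ξ : MonoidAlgebra K (L ≃ₐ[K] L)} (hξ : ξ ≠ 0)
    {k : K} {s : ℤ} (hk : v (algebraMap K L k) = s) (hs : 0 < s) (m : ℤ) :
    ∃ y, (m : WithTop ℤ) ≤ v y ∧ actK K L ξ y ≠ 0 := by
  obtain ⟨y, hy⟩ := exists_actK_ne_zero ξ hξ
  have hy0 : y ≠ 0 := by rintro rfl; exact hy (actK_zero ξ)
  lift v y to ℤ using (v.ne_top_iff.mpr hy0) with t ht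
  have hk0 : k ≠ 0 := by rintro rfl; simp at hk
  refine ⟨algebraMap K L (k ^ (m - t).toNat) * y, ?_, ?_⟩
  · rw [v.map_mul, map_pow, v.map_pow, hk, ← ht]
    norm_cast
    rw [nsmul_eq_mul]
    nlinarith [Int.self_le_toNat (m - t)]
  · rw [actK_algebraMap_mul]
    exact mul_ne_zero ((map_ne_zero _).mpr (pow_ne_zero _ hk0)) hy

lemma exists_isLeast_valuation_actK (hv : ∀ (σ : L ≃ₐ[K] L) x, v (σ x) = v x)
    {ξ : MonoidAlgebra K (L ≃ₐ[K] L)} (hξ : ξ ≠ 0)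
    {k : K} {s : ℤ} (hk : v (algebraMap K L k) = s) (hs : 0 < s) (m : ℤ) :
    ∃ f : ℤ, IsLeast {w | ∃ y, (m : WithTop ℤ) ≤ v y ∧ v (actK K L ξ y) = w} f := by
  obtain ⟨c, hc⟩ := exists_le_add_valuation_le_valuation_actK v hv ξ
  obtain ⟨y, hym, hy⟩ := exists_le_valuation_actK_ne_zero v hξ hk hs m
  refine WithTop.exists_isLeast_coe ⟨c + m, ?_⟩ ?_
  · rintro _ ⟨z, hzm, rfl⟩
    exact (add_le_add_right hzm _).trans (hc z)
  · lift v (actK K L ξ y) to ℤ using v.ne_top_iff.mpr hy with t ht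
    exact ⟨t, y, hym, ht.symm⟩

lemma exists_valuation_eq_of_isLeast (T : L →+ L) {m f : ℤ}
    (hf : IsLeast {w | ∃ y, (m : WithTop ℤ) ≤ v y ∧ v (T y) = w} f) {x : L} (hx : v x = m) :
    ∃ z, v z = m ∧ v (T z) = f := by
  obtain ⟨y, hym, hyf⟩ := hf.1
  have hxf : (f : WithTop ℤ) ≤ v (T x) := hf.2 ⟨x, hx.ge, rfl⟩
  rcases hym.eq_or_lt with hym | hym
  · exact ⟨y, hym.symm, hyf⟩
  rcases hxf.eq_or_lt with hxf | hxf
  · exact ⟨x, hx, hxf.symm⟩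
  refine ⟨x + y, ?_, ?_⟩
  · rw [v.map_add_eq_of_lt_left (hx ▸ hym), hx]
  · rw [map_add, v.map_add_eq_of_lt_right (hyf ▸ hxf), hyf]

end Valuation

theorem stmt_17_general (p n : ℕ)
    (K L : Type) [Field K] [Field L] [Algebra K L] [IsGalois K L] [FiniteDimensional K L]
    (vL : L → WithTop ℤ) (hctx : LocalCtx p n K L vL)
    (ξ : MonoidAlgebra K (L ≃ₐ[K] L)) (hξ : ξ ≠ 0) :
    ∃ fξ : ℤ → ℤ,
      (∀ m : ℤ, IsLeast
        {v : WithTop ℤ | ∃ y : L, (m : WithTop ℤ) ≤ vL y ∧ vL (actK K L ξ y) = v}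
        ((fξ m : ℤ) : WithTop ℤ)) ∧
      (∀ m : ℤ, fξ m ≤ fξ (m + 1)) ∧
      (∀ m : ℤ, ∃ z : L, vL z = (m : WithTop ℤ) ∧
        vL (actK K L ξ z) = ((fξ m : ℤ) : WithTop ℤ)) := by
  obtain ⟨hval, hgal, -⟩ := hctx
  let v := hval.toAddValuation_s17
  have hsurj := hval.2.2.2.2
  obtain ⟨π, hπ⟩ := hsurj 1
  have hnorm : v (algebraMap K L (Algebra.norm K π)) = (Fintype.card (L ≃ₐ[K] L) : ℤ) := by
    rw [v.map_algebraMap_norm hgal, hval.coe_toAddValuation, hπ]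
    simp
  choose f hf using exists_isLeast_valuation_actK v hgal hξ hnorm (by simpa using Fintype.card_pos)
  refine ⟨f, hf, fun m => WithTop.coe_le_coe.mp ((hf (m + 1)).mono (hf m) ?_), fun m => ?_⟩
  · rintro _ ⟨y, hy, rfl⟩
    exact ⟨y, (WithTop.coe_le_coe.mpr (by omega)).trans hy, rfl⟩
  · obtain ⟨x, hx⟩ := hsurj m
    exact exists_valuation_eq_of_isLeast v (AddMonoidHom.mk' (actK K L ξ) (actK_add ξ)) (hf m) hx

/-- Well-definedness and basic properties of f_ξ. -/
theorem stmt_17 (p n : ℕ) (hp : p.Prime) (hn : 1 ≤ n)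
    (K L : Type) [Field K] [Field L] [Algebra K L] [IsGalois K L] [FiniteDimensional K L]
    (hdeg : Nat.card (L ≃ₐ[K] L) = p ^ n)
    (vL : L → WithTop ℤ) (hctx : LocalCtx p n K L vL)
    (ξ : MonoidAlgebra K (L ≃ₐ[K] L)) (hξ : ξ ≠ 0) :
    ∃ fξ : ℤ → ℤ,
      (∀ m : ℤ, IsLeast
        {v : WithTop ℤ | ∃ y : L, (m : WithTop ℤ) ≤ vL y ∧ vL (actK K L ξ y) = v}
        ((fξ m : ℤ) : WithTop ℤ)) ∧
      (∀ m : ℤ, fξ m ≤ fξ (m + 1)) ∧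
      (∀ m : ℤ, ∃ z : L, vL z = (m : WithTop ℤ) ∧
        vL (actK K L ξ z) = ((fξ m : ℤ) : WithTop ℤ)) :=
  stmt_17_general p n K L vL hctx ξ hξ
end
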